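/- arXiv:2412.05865 — 5 statements merged into one kernel-verified Lean document; each statement's English description precedes it below -/
import Mathlib

section
/- For all integers q ≥ 1 and 0 ≤ L ≤ C, the number of distinct length-L subsequences satisfies M_q(C,L) ≤ M_{q+1}(C,L). -/
/-- The length-`C` prefix of the cyclically alternating sequence `1,2,…,q,1,2,…,q,…`:
its `i`-th symbol (1-indexed) is `((i-1) mod q) + 1`. -/
def altSeq (q C : ℕ) : List ℕ := (List.range C).map (fun i => i % q + 1)

/-- `M q C L`: the number of distinct length-`L` subsequences of `altSeq q C`. -/
def M (q C L : ℕ) : ℕ :=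
  ((altSeq q C).sublists.toFinset.filter (fun s => s.length = L)).card

open List

/-- Greedy (leftmost) embedding positions of a word in the alphabet-`q`
cyclic sequence, searching from position `p` onwards. -/
def posFrom (q : ℕ) : ℕ → List ℕ → List ℕ
  | _, [] => []
  | p, b :: l =>
    (p + (b - 1 + q - p % q) % q) :: posFrom q (p + (b - 1 + q - p % q) % q + 1) l

lemma key_mod (q p d : ℕ) (hq : 0 < q) :
    ((p + d) % q + q - p % q) % q = d % q := by
  have hlt : p % q < q := Nat.mod_lt _ hq
  have heq : ((p + d) % q + q - p % q) + p % q = (p + d) % q + q := by omega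
  have h1 : (((p + d) % q + q - p % q) + p % q) % q = (d + p) % q := by
    rw [heq, Nat.add_mod_right, Nat.mod_mod_of_dvd _ dvd_rfl, Nat.add_comm]
  have h2 : p % q ≡ p [MOD q] := Nat.mod_modEq p q
  exact Nat.ModEq.add_right_cancel h2 h1

lemma idx_mod (q p c : ℕ) (hq : 0 < q) :
    (p + (c + q - p % q) % q) % q = c % q := by
  have hlt : p % q < q := Nat.mod_lt _ hq
  have h2 : (c + q - p % q) % q ≡ c + q - p % q [MOD q] := Nat.mod_modEq _ q
  have h3 : p + (c + q - p % q) % q ≡ p % q + (c + q - p % q) [MOD q] :=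
    ((Nat.mod_modEq p q).symm).add h2
  have h4 : p % q + (c + q - p % q) = c + q := by omega
  rw [h4] at h3
  exact h3.trans (Nat.add_mod_right c q)

lemma le_of_resid (q : ℕ) (hq : 0 < q) {p j c : ℕ} (hpj : p ≤ j)
    (hj : j % q = c % q) : p + (c + q - p % q) % q ≤ j := by
  obtain ⟨d, rfl⟩ : ∃ d, j = p + d := ⟨j - p, by omega⟩
  have hlt : p % q < q := Nat.mod_lt _ hq
  have hce : q * (c / q) + c % q = c := Nat.div_add_mod c q
  have e : c + q - p % q = q * (c / q) + (c % q + q - p % q) := by omega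
  rw [e, Nat.mul_add_mod, ← hj, key_mod q p d hq]
  have := Nat.mod_le d q
  omega

lemma posFrom_length (q : ℕ) : ∀ (s : List ℕ) (p : ℕ), (posFrom q p s).length = s.length := by
  intro s
  induction s with
  | nil => intro p; rfl
  | cons b l ih => intro p; simp [posFrom, ih]

lemma posFrom_head (q : ℕ) (hq : 0 < q) :
    ∀ (s : List ℕ) (p : ℕ), ∀ x ∈ (posFrom q p s).head?, p ≤ x ∧ x < p + q := by
  intro s p x hx
  cases s with
  | nil => simp [posFrom] at hx
  | cons b l =>
    simp only [posFrom, List.head?_cons, Option.mem_def, Option.some_inj] at hx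
    subst hx
    have : (b - 1 + q - p % q) % q < q := Nat.mod_lt _ hq
    omega

lemma posFrom_chain (q : ℕ) (hq : 0 < q) :
    ∀ (s : List ℕ) (p : ℕ),
      List.Chain' (fun a b => a < b ∧ b < a + 1 + q) (posFrom q p s) := by
  intro s
  induction s with
  | nil => intro p; simp [posFrom]; exact List.isChain_nil
  | cons b l ih =>
    intro p
    simp only [posFrom]
    apply List.isChain_cons.mpr
    refine ⟨?_, ih _⟩
    intro x hx
    have := posFrom_head q hq l (p + (b - 1 + q - p % q) % q + 1) x hx
    omega

lemma posFrom_readoff (q : ℕ) (hq : 0 < q) :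
    ∀ (s : List ℕ) (p : ℕ), (∀ b ∈ s, 1 ≤ b ∧ b ≤ q) →
      (posFrom q p s).map (fun i => i % q + 1) = s := by
  intro s
  induction s with
  | nil => intro p _; rfl
  | cons b l ih =>
    intro p hb
    obtain ⟨hb1, hb2⟩ := hb b List.mem_cons_self
    simp only [posFrom, List.map_cons]
    rw [idx_mod q p (b - 1) hq, Nat.mod_eq_of_lt (by omega), ih _ (fun c hc => hb c (List.mem_cons_of_mem _ hc))]
    congr 1
    omega

lemma posFrom_mono (q : ℕ) (hq : 0 < q) :
    ∀ (s : List ℕ) (p p' : ℕ), p ≤ p' →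
      List.Forall₂ (· ≤ ·) (posFrom q p s) (posFrom q p' s) := by
  intro s
  induction s with
  | nil => intro p p' _; exact List.Forall₂.nil
  | cons b l ih =>
    intro p p' hpp
    simp only [posFrom]
    have hle : p + (b - 1 + q - p % q) % q ≤ p' + (b - 1 + q - p' % q) % q := by
      apply le_of_resid q hq
      · have : (b - 1 + q - p' % q) % q < q := Nat.mod_lt _ hq
        omega
      · exact idx_mod q p' (b - 1) hq
    exact List.Forall₂.cons hle (ih _ _ (by omega))

lemma forall₂_le_lt {A B : List ℕ} (h : List.Forall₂ (· ≤ ·) A B) {m : ℕ}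
    (hB : ∀ y ∈ B, y < m) : ∀ x ∈ A, x < m := by
  induction h with
  | nil => simp
  | @cons a b A B hab h ih =>
    intro x hx
    rcases List.mem_cons.mp hx with rfl | hx
    · exact lt_of_le_of_lt hab (hB _ List.mem_cons_self)
    · exact ih (fun y hy => hB y (List.mem_cons_of_mem _ hy)) x hx

lemma posFrom_min (q : ℕ) (hq : 0 < q) :
    ∀ (n p : ℕ) (s : List ℕ),
      s <+ (List.range' p n).map (fun i => i % q + 1) →
      ∀ x ∈ posFrom q p s, x < p + n := by
  intro n
  induction n with
  | zero =>
    intro p s h x hx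
    rw [List.range'_zero, List.map_nil, List.sublist_nil] at h
    subst h
    simp [posFrom] at hx
  | succ n ih =>
    intro p s h x hx
    rw [List.range'_succ, List.map_cons] at h
    cases s with
    | nil => simp [posFrom] at hx
    | cons b l =>
      cases h with
      | cons _ h' =>
        have h2 := ih (p + 1) (b :: l) h'
        have h3 := posFrom_mono q hq (b :: l) p (p + 1) (by omega)
        have := forall₂_le_lt h3 h2 x hx
        omega
      | cons_cons _ h' =>
        have hi : p % q + 1 - 1 + q - p % q = q := by
          have : p % q < q := Nat.mod_lt _ hq
          omega
        simp only [posFrom, hi, Nat.mod_self, Nat.add_zero] at hx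
        rcases List.mem_cons.mp hx with rfl | hx
        · omega
        · have := ih (p + 1) l h' x hx
          omega

lemma posFrom_fix (q' : ℕ) (hq' : 0 < q') :
    ∀ (ps : List ℕ) (p : ℕ),
      List.Chain' (fun a b => a < b ∧ b < a + 1 + q') ps →
      (∀ x ∈ ps.head?, p ≤ x ∧ x < p + q') →
      posFrom q' p (ps.map (fun i => i % q' + 1)) = ps := by
  intro ps
  induction ps with
  | nil => intro p _ _; rfl
  | cons i l ih =>
    intro p hch hhd
    obtain ⟨hp1, hp2⟩ := hhd i (by simp)
    obtain ⟨hrel, htail⟩ := List.isChain_cons.mp hch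
    have hd : p + (i % q' + 1 - 1 + q' - p % q') % q' = i := by
      have h1 : i % q' + 1 - 1 = i % q' := by omega
      have h2 : (i % q' + q' - p % q') % q' = (i - p) % q' := by
        have := key_mod q' p (i - p) hq'
        rwa [show p + (i - p) = i by omega] at this
      rw [h1, h2, Nat.mod_eq_of_lt (by omega)]
      omega
    simp only [List.map_cons, posFrom, hd]
    congr 1
    apply ih (i + 1) htail
    intro x hx
    have := hrel x hx
    omega

lemma sublist_range_of_chain {C : ℕ} (ps : List ℕ) (h : ps.Chain' (· < ·))
    (hlt : ∀ x ∈ ps, x < C) : ps <+ List.range C := by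
  have hpw : ps.Pairwise (· < ·) := List.isChain_iff_pairwise.mp h
  have hnd : ps.Nodup := hpw.imp ne_of_lt
  have hsub : ps ⊆ List.range C := fun x hx => List.mem_range.mpr (hlt x hx)
  exact List.sublist_of_subperm_of_pairwise (hnd.subperm hsub)
    (hpw.imp le_of_lt) (List.pairwise_lt_range.imp le_of_lt)

theorem stmt0 (q C L : ℕ) (hq : 1 ≤ q) (hLC : L ≤ C) :
    M q C L ≤ M (q + 1) C L := by
  unfold M
  apply Finset.card_le_card_of_injOn
    (fun s => (posFrom q 0 s).map (fun i => i % (q + 1) + 1))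
  · intro s hs
    simp only [Finset.mem_coe, Finset.mem_filter, List.mem_toFinset, List.mem_sublists] at hs ⊢
    obtain ⟨hs, hl⟩ := hs
    have hlt : ∀ x ∈ posFrom q 0 s, x < C := by
      intro x hx
      have hsub : s <+ (List.range' 0 C).map (fun i => i % q + 1) := by
        rwa [← List.range_eq_range']
      have := posFrom_min q hq C 0 s hsub x hx
      omega
    have hch : (posFrom q 0 s).Chain' (· < ·) :=
      (posFrom_chain q hq s 0).imp (fun _ _ h => h.1)
    constructor
    · exact (sublist_range_of_chain _ hch hlt).map _
    · rw [List.length_map, posFrom_length, hl]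
  · intro s hs t ht hft
    simp only [Finset.coe_filter, Set.mem_setOf_eq, List.mem_toFinset,
      List.mem_sublists] at hs ht
    have hsym : ∀ (u : List ℕ), u <+ altSeq q C → ∀ b ∈ u, 1 ≤ b ∧ b ≤ q := by
      intro u hu b hb
      have := hu.subset hb
      simp only [altSeq, List.mem_map, List.mem_range] at this
      obtain ⟨i, _, rfl⟩ := this
      have := Nat.mod_lt i hq
      omega
    have hfix : ∀ (u : List ℕ),
        posFrom (q + 1) 0 ((posFrom q 0 u).map (fun i => i % (q + 1) + 1))
          = posFrom q 0 u := by
      intro u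
      apply posFrom_fix (q + 1) (by omega)
      · exact (posFrom_chain q hq u 0).imp (fun a b h => ⟨h.1, by omega⟩)
      · intro x hx
        have := posFrom_head q hq u 0 x hx
        omega
    have hpos : posFrom q 0 s = posFrom q 0 t := by
      rw [← hfix s, ← hfix t]
      simp only at hft
      rw [hft]
    calc s = (posFrom q 0 s).map (fun i => i % q + 1) :=
            (posFrom_readoff q hq s 0 (hsym s hs.1)).symm
      _ = (posFrom q 0 t).map (fun i => i % q + 1) := by rw [hpos]
      _ = t := posFrom_readoff q hq t 0 (hsym t ht.1)
end

section
/- For all integers n ≥ 1, v ≥ 1 and 0 ≤ u ≤ v, it holds that (v choose u)^n ≤ M_v(n·v, n·u). -/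
/-- The basic block `[1, 2, …, q]`. -/
def blockSeq (q : ℕ) : List ℕ := (List.range q).map (fun i => i + 1)

lemma altSeq_mul (v n : ℕ) :
    altSeq v (n * v) = (List.replicate n (blockSeq v)).flatten := by
  induction n with
  | zero => simp [altSeq]
  | succ n ih =>
    have : (n + 1) * v = n * v + v := by ring
    rw [this]
    unfold altSeq at ih ⊢
    rw [List.range_add, List.map_append, ih, List.replicate_succ']
    simp only [List.flatten_append, List.flatten_cons, List.flatten_nil, List.append_nil]
    congr 1
    unfold blockSeq
    rw [List.map_map]
    apply List.map_congr_left
    intro i hi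
    simp only [List.mem_range] at hi
    have : (n * v + i) % v = i % v := by
      rw [Nat.mul_comm, Nat.add_comm, Nat.add_mul_mod_self_left]
    simp [this, Nat.mod_eq_of_lt hi]

lemma join_len (u : ℕ) : ∀ (l : List (List ℕ)), (∀ x ∈ l, x.length = u) →
    l.flatten.length = l.length * u := by
  intro l
  induction l with
  | nil => simp
  | cons a t ih =>
    intro h
    simp only [List.flatten_cons, List.length_append, List.length_cons]
    rw [h a (by simp), ih (fun x hx => h x (by simp [hx]))]
    ring

lemma join_inj (u : ℕ) : ∀ (l₁ l₂ : List (List ℕ)), l₁.length = l₂.length →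
    (∀ x ∈ l₁, x.length = u) → (∀ x ∈ l₂, x.length = u) →
    l₁.flatten = l₂.flatten → l₁ = l₂ := by
  intro l₁
  induction l₁ with
  | nil => intro l₂ h _ _ _; exact (List.length_eq_zero_iff.mp h.symm).symm
  | cons a t ih =>
    intro l₂ hlen h1 h2 hj
    cases l₂ with
    | nil => simp at hlen
    | cons b s =>
      simp only [List.flatten_cons] at hj
      have ha : a.length = u := h1 a (by simp)
      have hb : b.length = u := h2 b (by simp)
      have hab : a = b := by
        have := congrArg (List.take u) hj
        rwa [List.take_left' ha, List.take_left' hb] at this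
      subst hab
      have hts : t = s := by
        apply ih s (by simpa using hlen) (fun x hx => h1 x (by simp [hx]))
          (fun x hx => h2 x (by simp [hx]))
        exact List.append_cancel_left hj
      rw [hts]

lemma join_sublist : ∀ (l : List (List ℕ)) (b : List ℕ),
    (∀ x ∈ l, x.Sublist b) → l.flatten.Sublist (List.replicate l.length b).flatten := by
  intro l
  induction l with
  | nil => simp
  | cons a t ih =>
    intro b h
    simp only [List.flatten_cons, List.length_cons, List.replicate_succ]
    exact (h a (by simp)).append (ih b (fun x hx => h x (by simp [hx])))

theorem stmt2 (n v u : ℕ) (hn : 1 ≤ n) (hv : 1 ≤ v) (huv : u ≤ v) :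
    (v.choose u) ^ n ≤ M v (n * v) (n * u) := by
  classical
  set b := blockSeq v with hb
  have hbnodup : b.Nodup := by
    unfold blockSeq at hb
    rw [hb]
    exact List.Nodup.map (fun x y h => by omega) List.nodup_range
  have hblen : b.length = v := by simp [hb, blockSeq]
  set S : Finset (List ℕ) := (List.sublistsLen u b).toFinset with hS
  have hScard : S.card = v.choose u := by
    rw [hS, List.toFinset_card_of_nodup (List.nodup_sublistsLen u hbnodup),
      List.length_sublistsLen, hblen]
  have hmemS : ∀ s ∈ S, s.Sublist b ∧ s.length = u := by
    intro s hs
    rw [hS, List.mem_toFinset, List.mem_sublistsLen] at hs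
    exact hs
  set T := ((altSeq v (n * v)).sublists.toFinset.filter (fun s => s.length = n * u)) with hT
  -- the injection
  have key : ∀ f : Fin n → S, (List.ofFn (fun i => ((f i : List ℕ)))).flatten ∈ T := by
    intro f
    have hlens : ∀ x ∈ List.ofFn (fun i => ((f i : List ℕ))), x.length = u := by
      intro x hx
      rw [List.mem_ofFn] at hx
      obtain ⟨i, rfl⟩ := hx
      exact (hmemS _ (f i).2).2
    rw [hT, Finset.mem_filter, List.mem_toFinset, List.mem_sublists]
    constructor
    · rw [altSeq_mul]
      have := join_sublist (List.ofFn (fun i => ((f i : List ℕ)))) b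
        (fun x hx => by
          rw [List.mem_ofFn] at hx
          obtain ⟨i, rfl⟩ := hx
          exact (hmemS _ (f i).2).1)
      simpa using this
    · rw [join_len u _ hlens]
      simp
  let G : (Fin n → S) → {x // x ∈ T} := fun f =>
    ⟨(List.ofFn (fun i => ((f i : List ℕ)))).flatten, key f⟩
  have hGinj : Function.Injective G := by
    intro f g hfg
    have h1 : (List.ofFn (fun i => ((f i : List ℕ)))).flatten
        = (List.ofFn (fun i => ((g i : List ℕ)))).flatten := congrArg Subtype.val hfg
    have h2 := join_inj u _ _ (by simp)
      (fun x hx => by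
        rw [List.mem_ofFn] at hx; obtain ⟨i, rfl⟩ := hx; exact (hmemS _ (f i).2).2)
      (fun x hx => by
        rw [List.mem_ofFn] at hx; obtain ⟨i, rfl⟩ := hx; exact (hmemS _ (g i).2).2)
      h1
    rw [List.ofFn_inj] at h2
    funext i
    exact Subtype.ext (congrFun h2 i)
  have := Fintype.card_le_of_injective G hGinj
  rw [Fintype.card_coe] at this
  have hcard : Fintype.card (Fin n → S) = (v.choose u) ^ n := by
    rw [Fintype.card_fun]
    simp [Fintype.card_coe, hScard]
  rw [hcard] at this
  exact this
end

section
/- For every integer q ≥ 1 and every ρ ∈ [0,1], cap(q,ρ) ≤ cap(q+1,ρ). -/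
open Filter

/-- `cap q ρ = limsup_{C→∞} log₂ M_q(C, ⌊ρC⌋) / C`. -/
noncomputable def cap (q : ℕ) (ρ : ℝ) : ℝ :=
  Filter.atTop.limsup (fun C : ℕ => Real.logb 2 (M q C ⌊ρ * C⌋₊) / C)

/-- The binary entropy function (base-2 logarithm). -/
noncomputable def binH (x : ℝ) : ℝ := -x * Real.logb 2 x - (1 - x) * Real.logb 2 (1 - x)

namespace Stmt3Aux

/-- The least index `i ≥ n` with `i % q = (a-1) % q` (the greedy next occurrence of
symbol `a` in the cyclic sequence, 0-indexed positions). -/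
def step (q n a : ℕ) : ℕ := n + ((a - 1) % q + q - n % q) % q

lemma step_ge (q n a : ℕ) : n ≤ step q n a := Nat.le_add_right _ _

lemma step_lt (hq : 0 < q) (n a : ℕ) : step q n a < n + q :=
  Nat.add_lt_add_left (Nat.mod_lt _ hq) n

lemma add_sub_mod (hq : 0 < q) (n b : ℕ) (hb : b < q) :
    (n + (b + q - n % q) % q) % q = b := by
  have hm : n % q < q := Nat.mod_lt _ hq
  have hd : q * (n / q) + n % q = n := Nat.div_add_mod n q
  rcases le_or_gt (n % q) b with h | h
  · have h1 : b + q - n % q = (b - n % q) + q := by omega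
    have h2 : (b + q - n % q) % q = b - n % q := by
      rw [h1, Nat.add_mod_right, Nat.mod_eq_of_lt (by omega)]
    have h3 : n + (b + q - n % q) % q = q * (n / q) + b := by rw [h2]; omega
    rw [h3, Nat.mul_add_mod, Nat.mod_eq_of_lt hb]
  · have h2 : (b + q - n % q) % q = b + q - n % q := Nat.mod_eq_of_lt (by omega)
    have h3 : n + (b + q - n % q) % q = q * (n / q + 1) + b := by
      rw [h2, Nat.mul_add, Nat.mul_one]; omega
    rw [h3, Nat.mul_add_mod, Nat.mod_eq_of_lt hb]

lemma step_mod (hq : 0 < q) (n a : ℕ) : step q n a % q = (a - 1) % q :=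
  add_sub_mod hq n _ (Nat.mod_lt _ hq)

lemma step_min (hq : 0 < q) {n k a : ℕ} (hnk : n ≤ k) (hk : k % q = (a - 1) % q) :
    step q n a ≤ k := by
  by_contra hcon
  push_neg at hcon
  have h1 : k % q = step q n a % q := by rw [hk, step_mod hq]
  have h2 : q ∣ step q n a - k := (Nat.modEq_iff_dvd' hcon.le).mp h1
  have h3 : q ≤ step q n a - k := Nat.le_of_dvd (by omega) h2
  have h4 := step_lt hq n a
  omega

lemma mod_unique (hq : 0 < q) {n x y : ℕ} (hx1 : n ≤ x) (hx2 : x < n + q)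
    (hy1 : n ≤ y) (hy2 : y < n + q) (hxy : x % q = y % q) : x = y := by
  rcases le_or_gt x y with h | h
  · have h2 : q ∣ y - x := (Nat.modEq_iff_dvd' h).mp hxy
    rcases Nat.eq_zero_or_pos (y - x) with h3 | h3
    · omega
    · have := Nat.le_of_dvd h3 h2; omega
  · have h2 : q ∣ x - y := (Nat.modEq_iff_dvd' h.le).mp hxy.symm
    have := Nat.le_of_dvd (by omega) h2; omega

/-- Greedy (leftmost) embedding positions (0-indexed) of string `s` into the cyclic
`q`-ary sequence, starting from position `n`. -/
def F (q : ℕ) : ℕ → List ℕ → List ℕ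
  | _, [] => []
  | n, a :: t => step q n a :: F q (step q n a + 1) t

lemma F_length (q : ℕ) : ∀ n s, (F q n s).length = s.length
  | _, [] => rfl
  | n, a :: t => by simp [F, F_length]

lemma F_map (hq : 0 < q) : ∀ n (s : List ℕ), (∀ a ∈ s, 1 ≤ a ∧ a ≤ q) →
    (F q n s).map (fun i => i % q + 1) = s
  | n, [], _ => rfl
  | n, a :: t, h => by
    obtain ⟨h1, h2⟩ := h a (List.mem_cons_self)
    simp only [F, List.map_cons]
    rw [step_mod hq, Nat.mod_eq_of_lt (by omega),
      F_map hq _ t (fun b hb => h b (List.mem_cons_of_mem _ hb))]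
    congr 1
    omega

/-- Validity of a position list: increasing, starting at `≥ n`, gaps at most `q`. -/
def Valid (q : ℕ) : ℕ → List ℕ → Prop
  | _, [] => True
  | n, i :: t => n ≤ i ∧ i < n + q ∧ Valid q (i + 1) t

lemma F_valid (hq : 0 < q) (hqq : q ≤ q') : ∀ n s, Valid q' n (F q n s)
  | _, [] => trivial
  | n, a :: t =>
    ⟨step_ge q n a, lt_of_lt_of_le (step_lt hq n a) (by omega), F_valid hq hqq _ t⟩

lemma F_GF (hq : 0 < q) : ∀ n p, Valid q n p → F q n (p.map (fun i => i % q + 1)) = p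
  | _, [], _ => rfl
  | n, i :: t, ⟨h1, h2, h3⟩ => by
    simp only [List.map_cons, F]
    have hstep : step q n (i % q + 1) = i := by
      refine mod_unique hq (step_ge q n _) (step_lt hq n _) h1 h2 ?_
      rw [step_mod hq]
      simp
    rw [hstep, F_GF hq (i + 1) t h3]

lemma F_le (hq : 0 < q) : ∀ n n' (s : List ℕ), n ≤ n' →
    List.Forall₂ (· ≤ ·) (F q n s) (F q n' s)
  | _, _, [], _ => List.Forall₂.nil
  | n, n', a :: t, h => by
    have hs : step q n a ≤ step q n' a :=
      step_min hq (le_trans h (step_ge q n' a)) (step_mod hq n' a)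
    exact List.Forall₂.cons hs (F_le hq _ _ t (by omega))

lemma forall₂_lt {B : ℕ} : ∀ {l l' : List ℕ}, List.Forall₂ (· ≤ ·) l l' →
    (∀ j ∈ l', j < B) → ∀ j ∈ l, j < B := by
  intro l l' h
  induction h with
  | nil => simp
  | @cons a b l₁ l₂ hab _ ih =>
    intro h' j hj
    rcases List.mem_cons.mp hj with rfl | hj
    · exact lt_of_le_of_lt hab (h' _ List.mem_cons_self)
    · exact ih (fun j hj => h' j (List.mem_cons_of_mem _ hj)) j hj

/-- Greedy embedding succeeds within the window: minimality of the leftmost embedding. -/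
lemma F_bound (hq : 0 < q) : ∀ m n (s : List ℕ),
    s.Sublist ((List.range' n m).map (fun i => i % q + 1)) → ∀ j ∈ F q n s, j < n + m := by
  intro m
  induction m with
  | zero =>
    intro n s hs
    have : s = [] := List.sublist_nil.mp (by simpa using hs)
    subst this
    simp [F]
  | succ m ih =>
    intro n s hs
    rw [List.range'_succ, List.map_cons] at hs
    cases s with
    | nil => simp [F]
    | cons a t =>
      cases hs with
      | cons _ h =>
        have h1 := ih (n + 1) (a :: t) h
        have h2 := forall₂_lt (F_le hq n (n + 1) (a :: t) (Nat.le_succ n)) h1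
        intro j hj
        have := h2 j hj
        omega
      | cons_cons _ h =>
        intro j hj
        have hstep : step q n (n % q + 1) = n := by
          have h1 := step_ge q n (n % q + 1)
          have h2 : step q n (n % q + 1) ≤ n :=
            step_min hq le_rfl (by simp [Nat.mod_mod_of_dvd])
          omega
        simp only [F, hstep, List.mem_cons] at hj
        rcases hj with rfl | hj
        · omega
        · have := ih (n + 1) t h j hj
          omega

/-- The greedy positions form a sublist of `range' n m` if they are all within bounds. -/
lemma F_sub (hq : 0 < q) : ∀ (s : List ℕ) m n,
    (∀ j ∈ F q n s, j < n + m) → (F q n s).Sublist (List.range' n m) := by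
  intro s
  induction s with
  | nil => intro m n _; simp [F]
  | cons a t ih =>
    intro m n hb
    simp only [F] at hb ⊢
    have hin : n ≤ step q n a := step_ge q n a
    have him : step q n a < n + m := hb _ List.mem_cons_self
    set i := step q n a with hi
    have hsplit : List.range' n m =
        List.range' n (i - n) ++ i :: List.range' (i + 1) (n + m - i - 1) := by
      have h1 := List.range'_append (s := n) (m := i - n) (n := m - (i - n)) (step := 1)
      have h2 : n + 1 * (i - n) = i := by omega
      have h3 : (i - n) + (m - (i - n)) = m := by omega
      rw [h2] at h1
      rw [h3] at h1
      have h4 : m - (i - n) = (n + m - i - 1) + 1 := by omega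
      rw [h4, List.range'_succ] at h1
      exact h1.symm
    rw [hsplit]
    have htail : (F q (i + 1) t).Sublist (List.range' (i + 1) (n + m - i - 1)) := by
      apply ih
      intro j hj
      have := hb j (List.mem_cons_of_mem _ hj)
      omega
    exact List.Sublist.trans (List.Sublist.cons₂ i htail) (List.sublist_append_right _ _)

lemma mem_symbols (hq : 0 < q) {s : List ℕ} {C : ℕ} (hs : s.Sublist (altSeq q C)) :
    ∀ a ∈ s, 1 ≤ a ∧ a ≤ q := by
  intro a ha
  have := hs.subset ha
  simp only [altSeq, List.mem_map, List.mem_range] at this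
  obtain ⟨i, _, rfl⟩ := this
  have := Nat.mod_lt i hq
  omega

/-- Key monotonicity: the number of distinct length-`L` subsequences does not decrease
when the alphabet size grows. -/
lemma M_le (hq : 0 < q) (C L : ℕ) : M q C L ≤ M (q + 1) C L := by
  classical
  unfold M
  apply Finset.card_le_card_of_injOn (fun s => (F q 0 s).map (fun i => i % (q + 1) + 1))
  · intro s hs
    simp only [Finset.mem_coe, Finset.mem_filter, List.mem_toFinset, List.mem_sublists] at hs ⊢
    obtain ⟨h1, h2⟩ := hs
    constructor
    · have hb : ∀ j ∈ F q 0 s, j < C := by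
        have hb0 := F_bound hq C 0 s (by
          simpa [altSeq, List.range_eq_range'] using h1)
        intro j hj
        have := hb0 j hj; omega
      have hsub : (F q 0 s).Sublist (List.range' 0 C) := F_sub hq s C 0 (by simpa using hb)
      have heq : altSeq (q + 1) C = (List.range' 0 C).map (fun i => i % (q + 1) + 1) := by
        simp [altSeq, List.range_eq_range']
      rw [heq]
      exact hsub.map _
    · rw [List.length_map, F_length]; exact h2
  · intro s hs s' hs' h
    simp only [Finset.coe_filter, Set.mem_setOf_eq, List.mem_toFinset,
      List.mem_sublists] at hs hs'
    have hv : Valid (q + 1) 0 (F q 0 s) := F_valid hq (Nat.le_succ q) 0 s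
    have hv' : Valid (q + 1) 0 (F q 0 s') := F_valid hq (Nat.le_succ q) 0 s'
    have hq1 : 0 < q + 1 := Nat.succ_pos q
    have hFF : F q 0 s = F q 0 s' := by
      have := congrArg (F (q + 1) 0) h
      rwa [F_GF hq1 0 _ hv, F_GF hq1 0 _ hv'] at this
    calc s = (F q 0 s).map (fun i => i % q + 1) :=
            (F_map hq 0 s (mem_symbols hq hs.1)).symm
      _ = (F q 0 s').map (fun i => i % q + 1) := by rw [hFF]
      _ = s' := F_map hq 0 s' (mem_symbols hq hs'.1)

lemma M_le_pow (q C L : ℕ) : M q C L ≤ 2 ^ C :=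
  calc M q C L ≤ (altSeq q C).sublists.toFinset.card := Finset.card_filter_le _ _
    _ ≤ (altSeq q C).sublists.length := (altSeq q C).sublists.toFinset_card_le
    _ = 2 ^ C := by rw [List.length_sublists]; simp [altSeq]

lemma logb_M_nonneg (q C L : ℕ) : 0 ≤ Real.logb 2 (M q C L) := by
  rcases Nat.eq_zero_or_pos (M q C L) with h | h
  · simp [h]
  · exact Real.logb_nonneg one_lt_two (by exact_mod_cast h)

lemma logb_M_le (q C L : ℕ) : Real.logb 2 (M q C L) ≤ C := by
  rcases Nat.eq_zero_or_pos (M q C L) with h | h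
  · simp [h]
  · calc Real.logb 2 (M q C L) ≤ Real.logb 2 ((2 : ℝ) ^ C) := by
          apply Real.logb_le_logb_of_le one_lt_two (by exact_mod_cast h)
          exact_mod_cast M_le_pow q C L
      _ = C := by
          rw [Real.logb_pow]
          simp

end Stmt3Aux

open Stmt3Aux in
theorem stmt3 (q : ℕ) (hq : 1 ≤ q) (ρ : ℝ) (hρ : ρ ∈ Set.Icc (0 : ℝ) 1) :
    cap q ρ ≤ cap (q + 1) ρ := by
  unfold cap
  apply Filter.limsup_le_limsup
  · filter_upwards with C
    have h1 : Real.logb 2 (M q C ⌊ρ * C⌋₊) ≤ Real.logb 2 (M (q + 1) C ⌊ρ * C⌋₊) := by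
      rcases Nat.eq_zero_or_pos (M q C ⌊ρ * C⌋₊) with h | h
      · rw [h]
        simpa using logb_M_nonneg (q + 1) C ⌊ρ * C⌋₊
      · apply Real.logb_le_logb_of_le one_lt_two (by exact_mod_cast h)
        exact_mod_cast M_le hq C ⌊ρ * C⌋₊
    rcases Nat.eq_zero_or_pos C with rfl | hC
    · simp
    have hC' : (0 : ℝ) < C := by exact_mod_cast hC
    exact div_le_div_of_nonneg_right h1 hC'.le
  · apply Filter.isCoboundedUnder_le_of_le atTop (x := 0)
    intro C
    exact div_nonneg (logb_M_nonneg q C _) (Nat.cast_nonneg C)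
  · apply Filter.isBoundedUnder_of
    refine ⟨1, fun C => ?_⟩
    rcases Nat.eq_zero_or_pos C with rfl | hC
    · simp
    have hC' : (0 : ℝ) < C := by exact_mod_cast hC
    rw [div_le_one hC']
    exact logb_M_le (q + 1) C _
end

section
/- Let q ≥ 2 be an integer and let a, b be positive integers with a < b. Then the limit as m → ∞ of log₂ M_q(m·b·q, m·a·q) / (m·b·q) exists and equals cap(q, a/b). -/
open Filter

open Topology

section Aux

lemma altSeq_succ (q C : ℕ) : altSeq q (C + 1) = altSeq q C ++ [C % q + 1] := by
  simp [altSeq, List.range_succ]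

lemma mem_filt {q C L : ℕ} {s : List ℕ} :
    s ∈ (altSeq q C).sublists.toFinset.filter (fun s => s.length = L) ↔
      s.Sublist (altSeq q C) ∧ s.length = L := by
  simp

lemma length_altSeq (q C : ℕ) : (altSeq q C).length = C := by simp [altSeq]

lemma M_pos {q C L : ℕ} (h : L ≤ C) : 0 < M q C L := by
  rw [M, Finset.card_pos]
  exact ⟨(altSeq q C).take L, mem_filt.2 ⟨List.take_sublist _ _,
    by simp [length_altSeq, h]⟩⟩

lemma M_le_two_pow (q C L : ℕ) : M q C L ≤ 2 ^ C := by
  calc M q C L ≤ (altSeq q C).sublists.toFinset.card := Finset.card_filter_le _ _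
    _ ≤ (altSeq q C).sublists.length := (altSeq q C).sublists.toFinset_card_le
    _ = 2 ^ C := by rw [List.length_sublists, length_altSeq]

lemma M_le_succ (q C L : ℕ) : M q C L ≤ M q (C + 1) L := by
  apply Finset.card_le_card
  intro s hs
  rw [mem_filt] at hs ⊢
  rw [altSeq_succ]
  exact ⟨hs.1.trans (List.sublist_append_left _ _), hs.2⟩

lemma M_le_succ_succ (q C L : ℕ) : M q C L ≤ M q (C + 1) (L + 1) := by
  apply Finset.card_le_card_of_injOn (fun s => s ++ [C % q + 1])
  · intro s hs
    rw [Finset.mem_coe, mem_filt] at hs ⊢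
    constructor
    · rw [altSeq_succ]
      exact hs.1.append (List.Sublist.refl _)
    · simp [hs.2]
  · intro s _ t _ h
    exact List.append_cancel_right h

lemma M_mono (q C : ℕ) : ∀ k L L', L ≤ L' → L' ≤ L + k → M q C L ≤ M q (C + k) L' := by
  intro k
  induction k with
  | zero =>
    intro L L' h1 h2
    have : L = L' := le_antisymm h1 (by simpa using h2)
    subst this; simp
  | succ k ih =>
    intro L L' h1 h2
    rcases Nat.lt_or_ge L' (L + k + 1) with h | h
    · have := ih L L' h1 (Nat.lt_succ_iff.1 h)
      exact this.trans (by rw [← Nat.add_assoc]; exact M_le_succ q (C + k) L')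
    · have hL' : L' = L + k + 1 := le_antisymm h2 h
      subst hL'
      have := ih L (L + k) (Nat.le_add_right _ _) le_rfl
      refine this.trans ?_
      rw [← Nat.add_assoc]
      exact M_le_succ_succ q (C + k) (L + k)

lemma altSeq_add {q C₁ C₂ : ℕ} (hd : q ∣ C₁) :
    altSeq q (C₁ + C₂) = altSeq q C₁ ++ altSeq q C₂ := by
  rw [altSeq, List.range_add, List.map_append, List.map_map]
  congr 1
  apply List.map_congr_left
  intro i _
  simp [Nat.add_mod, Nat.eq_zero_of_dvd_of_lt, (Nat.mod_eq_zero_of_dvd hd)]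

lemma M_super {q C₁ C₂ L₁ L₂ : ℕ} (hd : q ∣ C₁) :
    M q C₁ L₁ * M q C₂ L₂ ≤ M q (C₁ + C₂) (L₁ + L₂) := by
  rw [M, M, M, ← Finset.card_product]
  apply Finset.card_le_card_of_injOn (fun p => p.1 ++ p.2)
  · intro p hp
    rw [Finset.mem_coe, Finset.mem_product] at hp; rw [Finset.mem_coe]
    obtain ⟨h1, h2⟩ := hp
    rw [mem_filt] at h1 h2 ⊢
    rw [altSeq_add hd]
    exact ⟨h1.1.append h2.1, by simp [h1.2, h2.2]⟩
  · intro p hp p' hp' h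
    rw [Finset.mem_coe, Finset.mem_product] at hp hp'
    obtain ⟨hl, hr⟩ := List.append_inj h (by
      rw [(mem_filt.1 hp.1).2, (mem_filt.1 hp'.1).2])
    exact Prod.ext hl hr

lemma floor_div_mul (a b : ℕ) (C : ℕ) : ⌊(a : ℝ) / b * C⌋₊ = a * C / b := by
  rw [div_mul_eq_mul_div, ← Nat.cast_mul, Nat.floor_div_natCast, Nat.floor_natCast]

lemma key_ineq {a b q : ℕ} (hq : 2 ≤ q) (ha : 0 < a) (hab : a < b) (C : ℕ) :
    C + (C / (b * q) + 2) * a * q ≤ (C / (b * q) + 2) * b * q + a * C / b := by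
  have hb : 0 < b := ha.trans hab
  set d := C / (b * q) with hd
  set r := C % (b * q) with hr
  have hC : b * q * d + r = C := Nat.div_add_mod C (b * q)
  have hrlt : r < b * q := Nat.mod_lt _ (by positivity)
  have he : a * C / b = a * q * d + a * r / b := by
    conv_lhs => rw [← hC]
    have h2 : a * (b * q * d + r) = a * r + a * q * d * b := by ring
    rw [h2, Nat.add_mul_div_right _ _ hb, Nat.add_comm]
  rw [he]
  have he2 : b * (a * r / b) + a * r % b = a * r := Nat.div_add_mod (a * r) b
  set e := a * r / b with hee
  set s := a * r % b with hss
  have hslt : s < b := Nat.mod_lt _ hb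
  -- goal: C + (d+2)*a*q ≤ (d+2)*b*q + (a*q*d + e)
  rw [← hC]
  zify
  zify at he2 hslt hrlt hab hq ha
  nlinarith [mul_pos (Int.natCast_pos.mpr hb) (by positivity : (0:ℤ) < (q:ℤ)),
    mul_nonneg (by linarith : (0:ℤ) ≤ (b:ℤ) - a) (by linarith : (0:ℤ) ≤ (b:ℤ) * q - 1 - r),
    mul_nonneg (by linarith : (0:ℤ) ≤ (b:ℤ) - a) (by linarith : (0:ℤ) ≤ (q:ℤ) - 2)]

lemma nat_helper (X Y Z C : ℕ) (h1 : C + X ≤ Z + Y) (h2 : C ≤ Z) : X ≤ Y + (Z - C) := by omega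

end Aux

lemma logb_M_le (q C L : ℕ) : Real.logb 2 (M q C L) ≤ C := by
  rcases Nat.eq_zero_or_pos (M q C L) with h | h
  · simp [h]
  · calc Real.logb 2 (M q C L) ≤ Real.logb 2 ((2:ℝ) ^ C) :=
        Real.logb_le_logb_of_le one_lt_two (by exact_mod_cast h)
          (by exact_mod_cast M_le_two_pow q C L)
    _ = C := by
        rw [Real.logb_pow, Real.logb_self_eq_one one_lt_two, mul_one]

theorem stmt9 (q a b : ℕ) (hq : 2 ≤ q) (ha : 0 < a) (hb : 0 < b) (hab : a < b) :
    Filter.Tendsto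
      (fun m : ℕ => Real.logb 2 (M q (m * b * q) (m * a * q)) / (m * b * q : ℝ))
      Filter.atTop (nhds (cap q ((a : ℝ) / b))) := by
  have hq0 : 0 < q := by omega
  have hP : 0 < b * q := by positivity
  set g : ℕ → ℝ := fun n => Real.logb 2 (M q (n * b * q) (n * a * q)) with hg
  have hMpos : ∀ n, 0 < M q (n * b * q) (n * a * q) := fun n =>
    M_pos (Nat.mul_le_mul_right q (Nat.mul_le_mul_left n hab.le))
  have hM1 : ∀ n, (1:ℝ) ≤ ((M q (n * b * q) (n * a * q) : ℕ) : ℝ) := fun n => by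
    exact_mod_cast hMpos n
  have hg0 : ∀ n, 0 ≤ g n := fun n => Real.logb_nonneg one_lt_two (hM1 n)
  -- subadditivity of -g
  have hsub : Subadditive (fun n => -g n) := by
    intro m n
    have hsup := M_super (q := q) (C₁ := m * b * q) (C₂ := n * b * q)
      (L₁ := m * a * q) (L₂ := n * a * q) ⟨m * b, by ring⟩
    have hEq1 : m * b * q + n * b * q = (m + n) * b * q := by ring
    have hEq2 : m * a * q + n * a * q = (m + n) * a * q := by ring
    rw [hEq1, hEq2] at hsup
    have hx : (0:ℝ) < (M q (m * b * q) (m * a * q) : ℝ) := by exact_mod_cast hMpos m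
    have hy : (0:ℝ) < (M q (n * b * q) (n * a * q) : ℝ) := by exact_mod_cast hMpos n
    have hlog : g m + g n ≤ g (m + n) := by
      have h1 : (M q (m*b*q) (m*a*q) : ℝ) * (M q (n*b*q) (n*a*q) : ℝ)
          ≤ ((M q ((m+n)*b*q) ((m+n)*a*q) : ℕ) : ℝ) := by exact_mod_cast hsup
      have h2 := Real.logb_le_logb_of_le one_lt_two (by positivity) h1
      rwa [Real.logb_mul hx.ne' hy.ne'] at h2
    simp only
    linarith
  have hbdd : BddBelow (Set.range fun n : ℕ => -g n / n) := by
    refine ⟨-((b : ℝ) * q), ?_⟩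
    rintro x ⟨n, rfl⟩
    rcases Nat.eq_zero_or_pos n with hn | hn
    · subst hn
      simp only [Nat.cast_zero, div_zero]
      nlinarith [hb, hq0, (by exact_mod_cast hb : (0:ℝ) < (b:ℝ)), (by exact_mod_cast hq0 : (0:ℝ) < (q:ℝ))]
    · have hgle : g n ≤ (n : ℝ) * b * q := by
        have := logb_M_le q (n * b * q) (n * a * q)
        calc g n ≤ ((n * b * q : ℕ) : ℝ) := this
          _ = (n : ℝ) * b * q := by push_cast; ring
      have hn' : (0:ℝ) < n := by exact_mod_cast hn
      show -((b:ℝ) * q) ≤ -g n / n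
      rw [neg_div]
      apply neg_le_neg
      rw [div_le_iff₀ hn']
      calc g n ≤ (n : ℝ) * b * q := hgle
        _ = (b : ℝ) * q * n := by ring
  have hlim := hsub.tendsto_lim hbdd
  set ℓ : ℝ := -(hsub.lim) / ((b : ℝ) * q) with hℓ
  have htf : Tendsto (fun m : ℕ => g m / ((m : ℝ) * b * q)) atTop (𝓝 ℓ) := by
    have h1 := hlim.div_const (-((b : ℝ) * q))
    have h2 : (fun n : ℕ => -g n / n / -((b : ℝ) * q))
        = fun m : ℕ => g m / ((m : ℝ) * b * q) := by
      funext n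
      rw [neg_div, div_neg, neg_div, neg_neg, div_div, ← mul_assoc]
    have h3 : hsub.lim / -((b : ℝ) * q) = ℓ := by
      rw [hℓ, div_neg, neg_div]
    rw [h2, h3] at h1
    exact h1
  -- the cap side
  set h : ℕ → ℝ := fun C => Real.logb 2 (M q C (a * C / b)) / C with hh
  have hcap : cap q ((a : ℝ) / b) = atTop.limsup h := by
    unfold cap
    congr 1
    funext C
    rw [floor_div_mul]
  have hLleC : ∀ C, a * C / b ≤ C := fun C => by
    calc a * C / b ≤ b * C / b := Nat.div_le_div_right (Nat.mul_le_mul_right C hab.le)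
      _ = C := Nat.mul_div_cancel_left C hb
  have hMC1 : ∀ C, (1:ℝ) ≤ ((M q C (a * C / b) : ℕ) : ℝ) := fun C => by
    exact_mod_cast M_pos (hLleC C)
  have hh0 : ∀ C, 0 ≤ h C :=
    fun C => div_nonneg (Real.logb_nonneg one_lt_two (hMC1 C)) (Nat.cast_nonneg C)
  have hh1 : ∀ C, h C ≤ 1 := by
    intro C
    rcases Nat.eq_zero_or_pos C with hC | hC
    · subst hC; simp [hh]
    · have hC' : (0:ℝ) < C := by exact_mod_cast hC
      rw [hh]
      simp only
      rw [div_le_one hC']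
      exact logb_M_le q C _
  set mfn : ℕ → ℕ := fun C => C / (b * q) + 2 with hmfn
  have hCle : ∀ C, C ≤ mfn C * b * q := by
    intro C
    have h1 := Nat.div_add_mod C (b * q)
    have h2 := Nat.mod_lt C hP
    have h3 : mfn C * b * q = b * q * (C / (b * q)) + 2 * (b * q) := by
      rw [hmfn]; ring
    omega
  have hCge : ∀ C, mfn C * b * q ≤ C + 2 * (b * q) := by
    intro C
    have h1 : C / (b * q) * (b * q) ≤ C := Nat.div_mul_le_self C (b * q)
    have h3 : mfn C * b * q = C / (b * q) * (b * q) + 2 * (b * q) := by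
      rw [hmfn]; ring
    omega
  have hdivEq : ∀ m : ℕ, a * (m * b * q) / b = m * a * q := by
    intro m
    have : a * (m * b * q) = m * a * q * b := by ring
    rw [this, Nat.mul_div_cancel _ hb]
  have hmono : ∀ C, M q C (a * C / b) ≤ M q (mfn C * b * q) (mfn C * a * q) := by
    intro C
    have hCk : C + (mfn C * b * q - C) = mfn C * b * q := Nat.add_sub_cancel' (hCle C)
    have hL : a * C / b ≤ mfn C * a * q := by
      rw [← hdivEq (mfn C)]
      exact Nat.div_le_div_right (Nat.mul_le_mul_left a (hCle C))
    have hL' : mfn C * a * q ≤ a * C / b + (mfn C * b * q - C) :=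
      nat_helper _ _ _ _ (key_ineq hq ha hab C) (hCle C)
    have := M_mono q C (mfn C * b * q - C) (a * C / b) (mfn C * a * q) hL hL'
    rwa [hCk] at this
  set rfn : ℕ → ℝ := fun C => g (mfn C) / C with hrfn
  have hhr : ∀ C, h C ≤ rfn C := by
    intro C
    rcases Nat.eq_zero_or_pos C with hC | hC
    · subst hC; simp [hh, hrfn]
    · have hC' : (0:ℝ) < C := by exact_mod_cast hC
      have hnum : Real.logb 2 (M q C (a * C / b)) ≤ g (mfn C) :=
        Real.logb_le_logb_of_le one_lt_two (by exact_mod_cast M_pos (hLleC C))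
          (by exact_mod_cast hmono C)
      exact (div_le_div_iff_of_pos_right hC').2 hnum
  -- Tendsto rfn → ℓ
  have hmtop : Tendsto mfn atTop atTop := by
    apply tendsto_atTop_atTop.2
    intro N
    refine ⟨N * (b * q), fun C hC => ?_⟩
    have h2 : N ≤ C / (b * q) := (Nat.le_div_iff_mul_le hP).2 hC
    have h3 : mfn C = C / (b * q) + 2 := rfl
    omega
  have h1 : Tendsto (fun C : ℕ => g (mfn C) / ((mfn C : ℝ) * b * q)) atTop (𝓝 ℓ) :=
    htf.comp hmtop
  set ratio : ℕ → ℝ := fun C => ((mfn C * b * q : ℕ) : ℝ) / C with hratio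
  have hratio1 : Tendsto ratio atTop (𝓝 1) := by
    have hupper : Tendsto (fun C : ℕ => 1 + (2 * (b:ℝ) * q) / C) atTop (𝓝 (1 + 0)) :=
      tendsto_const_nhds.add (tendsto_const_nhds.div_atTop tendsto_natCast_atTop_atTop)
    rw [add_zero] at hupper
    apply tendsto_of_tendsto_of_tendsto_of_le_of_le' tendsto_const_nhds hupper
    · filter_upwards [eventually_ge_atTop 1] with C hC
      have hC' : (0:ℝ) < C := by exact_mod_cast hC
      show (1:ℝ) ≤ ((mfn C * b * q : ℕ) : ℝ) / C
      rw [le_div_iff₀ hC']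
      have h3 : (C:ℝ) ≤ ((mfn C * b * q : ℕ) : ℝ) := by exact_mod_cast hCle C
      linarith
    · filter_upwards [eventually_ge_atTop 1] with C hC
      have hC' : (0:ℝ) < C := by exact_mod_cast hC
      show ((mfn C * b * q : ℕ) : ℝ) / C ≤ 1 + (2 * (b:ℝ) * q) / C
      rw [div_le_iff₀ hC']
      have h3 : ((mfn C * b * q : ℕ) : ℝ) ≤ (C:ℝ) + 2 * (b:ℝ) * q := by
        calc ((mfn C * b * q : ℕ) : ℝ) ≤ ((C + 2 * (b * q) : ℕ) : ℝ) := by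
              exact_mod_cast hCge C
          _ = (C:ℝ) + 2 * (b:ℝ) * q := by push_cast; ring
      have h4 : (1 + 2 * (b:ℝ) * q / C) * C = (C:ℝ) + 2 * (b:ℝ) * q := by
        field_simp
      linarith
  have hrfneq : rfn =ᶠ[atTop] fun C => (g (mfn C) / ((mfn C : ℝ) * b * q)) * ratio C := by
    filter_upwards [eventually_ge_atTop 1] with C hC
    have hmpos : 0 < mfn C := Nat.succ_pos _
    have hm' : (0:ℝ) < mfn C := by exact_mod_cast hmpos
    have hb' : (0:ℝ) < b := by exact_mod_cast hb
    have hq' : (0:ℝ) < q := by exact_mod_cast hq0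
    have hne : ((mfn C : ℝ) * b * q) ≠ 0 := by positivity
    show g (mfn C) / C = g (mfn C) / ((mfn C : ℝ) * b * q) * (((mfn C * b * q : ℕ) : ℝ) / C)
    have hcast : ((mfn C * b * q : ℕ) : ℝ) = (mfn C : ℝ) * b * q := by push_cast; ring
    rw [hcast, div_mul_div_comm, mul_comm (g (mfn C)) ((mfn C : ℝ) * b * q),
      mul_div_mul_left _ _ hne]
  have htr : Tendsto rfn atTop (𝓝 ℓ) := by
    have h2 := h1.mul hratio1
    rw [mul_one] at h2
    exact Tendsto.congr' hrfneq.symm h2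
  have hlimsup_le : atTop.limsup h ≤ ℓ := by
    have h2 : atTop.limsup h ≤ atTop.limsup rfn :=
      limsup_le_limsup (Eventually.of_forall hhr)
        (isCoboundedUnder_le_of_le atTop (fun C => hh0 C))
        htr.isBoundedUnder_le
    rw [htr.limsup_eq] at h2
    exact h2
  have hge : ℓ ≤ atTop.limsup h := by
    by_contra hlt
    push_neg at hlt
    obtain ⟨c, hc1, hc2⟩ := exists_between hlt
    have hφ : Tendsto (fun m : ℕ => m * b * q) atTop atTop := by
      apply tendsto_atTop_atTop.2
      intro N
      exact ⟨N, fun m hm => le_trans hm (le_trans (Nat.le_mul_of_pos_right m hb)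
        (Nat.le_mul_of_pos_right (m * b) hq0))⟩
    have hfeq : ∀ m : ℕ, h (m * b * q) = g m / ((m : ℝ) * b * q) := by
      intro m
      show Real.logb 2 (M q (m * b * q) (a * (m * b * q) / b)) / ((m * b * q : ℕ) : ℝ)
        = g m / ((m : ℝ) * b * q)
      rw [hdivEq m]
      have : ((m * b * q : ℕ) : ℝ) = (m : ℝ) * b * q := by push_cast; ring
      rw [this]
    have hev : ∀ᶠ m : ℕ in atTop, c ≤ g m / ((m : ℝ) * b * q) :=
      htf.eventually_const_le hc2
    have hfreq : ∃ᶠ C in atTop, c ≤ h C :=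
      hφ.frequently ((hev.mono fun m hm => by rw [hfeq m]; exact hm).frequently)
    have hcle := le_limsup_of_frequently_le hfreq (isBoundedUnder_of ⟨1, hh1⟩)
    exact absurd (hcle.trans_lt hc1) (lt_irrefl c)
  have hcapeq : cap q ((a : ℝ) / b) = ℓ := by
    rw [hcap]
    exact le_antisymm hlimsup_le hge
  rw [hcapeq]
  exact htf
end

section
/- Let q ≥ 2 be an integer and let ρ* ∈ (0,1) satisfy ρ*/H(ρ*) = 1/log₂ q. Then: (i) for every ρ ∈ (0, 2/(q+1)], ρ/cap(q,ρ) = 1/log₂ q; and (ii) for every ρ ∈ [ρ*, 1), ρ/cap(q,ρ) ≥ 1/log₂ q. Consequently the infimum of ρ/cap(q,ρ) over ρ ∈ (0,1) is attained within the interval [2/(q+1), ρ*]. -/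
open Filter

open List Real Topology

namespace S17


def subOf (q : ℕ) : ℕ → List ℕ → List ℕ
  | _, [] => []
  | t, a :: g => ((t + a - 1) % q + 1) :: subOf q (t + a) g

lemma subOf_length (q : ℕ) : ∀ (g : List ℕ) (t : ℕ), (subOf q t g).length = g.length
  | [], _ => rfl
  | a :: g, t => by simp [subOf, subOf_length q g]

lemma altSeq_drop (q C i : ℕ) (h : i < C) :
    (altSeq q C).drop i = (i % q + 1) :: (altSeq q C).drop (i + 1) := by
  have hlen : i < (altSeq q C).length := by simp [altSeq, h]
  rw [List.drop_eq_getElem_cons hlen]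
  simp [altSeq, h]

lemma subOf_sublist (q C : ℕ) : ∀ (g : List ℕ) (t : ℕ), (∀ a ∈ g, 1 ≤ a) →
    t + g.sum ≤ C → subOf q t g <+ (altSeq q C).drop t
  | [], t, _, _ => by simp [subOf]
  | a :: g, t, hmem, hsum => by
    have ha : 1 ≤ a := hmem a (by simp)
    have hsum' : (t + a) + g.sum ≤ C := by simp [List.sum_cons] at hsum; omega
    have hlt : t + a - 1 < C := by
      have := g.sum.zero_le; omega
    have IH := subOf_sublist q C g (t + a) (fun b hb => hmem b (by simp [hb])) hsum'
    have hdrop : (altSeq q C).drop (t + a - 1) =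
        ((t + a - 1) % q + 1) :: (altSeq q C).drop (t + a) := by
      have := altSeq_drop q C (t + a - 1) hlt
      rwa [Nat.sub_add_cancel (by omega)] at this
    have h1 : subOf q t (a :: g) <+ (altSeq q C).drop (t + a - 1) := by
      rw [hdrop, subOf]
      exact List.Sublist.cons₂ _ IH
    refine h1.trans ?_
    have h2 : (altSeq q C).drop (t + a - 1) = ((altSeq q C).drop t).drop (a - 1) := by
      rw [List.drop_drop]; congr 1; omega
    rw [h2]
    exact List.drop_sublist _ _

lemma head_eq_aux (q t a b : ℕ) (ha1 : 1 ≤ a) (ha2 : a ≤ q) (hb1 : 1 ≤ b) (hb2 : b ≤ q)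
    (h : (t + a - 1) % q = (t + b - 1) % q) : a = b := by
  rcases le_total a b with hle | hle
  · have hd : b - a < q := by omega
    have he : t + b - 1 = (t + a - 1) + (b - a) := by omega
    rw [he] at h
    have h2 : (t + a - 1) + 0 ≡ (t + a - 1) + (b - a) [MOD q] := by
      simpa [Nat.ModEq] using h
    have h3 := Nat.ModEq.add_left_cancel' (t + a - 1) h2
    have h4 : (b - a) % q = 0 % q := h3.symm
    rw [Nat.mod_eq_of_lt hd, Nat.zero_mod] at h4
    omega
  · have hd : a - b < q := by omega
    have he : t + a - 1 = (t + b - 1) + (a - b) := by omega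
    rw [he] at h
    have h2 : (t + b - 1) + 0 ≡ (t + b - 1) + (a - b) [MOD q] := by
      simpa [Nat.ModEq] using h.symm
    have h3 := Nat.ModEq.add_left_cancel' (t + b - 1) h2
    have h4 : (a - b) % q = 0 % q := h3.symm
    rw [Nat.mod_eq_of_lt hd, Nat.zero_mod] at h4
    omega

lemma subOf_inj (q : ℕ) : ∀ (g₁ g₂ : List ℕ) (t : ℕ),
    (∀ a ∈ g₁, 1 ≤ a ∧ a ≤ q) → (∀ a ∈ g₂, 1 ≤ a ∧ a ≤ q) →
    subOf q t g₁ = subOf q t g₂ → g₁ = g₂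
  | [], [], _, _, _, _ => rfl
  | [], b :: g₂, t, _, _, h => by simp [subOf] at h
  | a :: g₁, [], t, _, _, h => by simp [subOf] at h
  | a :: g₁, b :: g₂, t, h1, h2, h => by
    obtain ⟨ha1, ha2⟩ := h1 a (by simp)
    obtain ⟨hb1, hb2⟩ := h2 b (by simp)
    simp only [subOf, List.cons.injEq] at h
    have hab : a = b := head_eq_aux q t a b ha1 ha2 hb1 hb2 (by omega)
    subst hab
    have := subOf_inj q g₁ g₂ (t + a) (fun x hx => h1 x (by simp [hx]))
      (fun x hx => h2 x (by simp [hx])) h.2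
    rw [this]




def Dset (q C L : ℕ) : Finset (Fin L → Fin q) :=
  Finset.univ.filter (fun d => ∑ i, ((d i : ℕ) + 1) ≤ C)


lemma card_D_le_M (q C L : ℕ) : (Dset q C L).card ≤ M q C L := by
  classical
  apply Finset.card_le_card_of_injOn
    (fun d => subOf q 0 (List.ofFn fun i => (d i : ℕ) + 1))
  · intro d hd
    simp only [Dset, Finset.mem_coe, Finset.mem_filter, Finset.mem_univ, true_and] at hd
    simp only [M, Finset.mem_coe, Finset.mem_filter, List.mem_toFinset, List.mem_sublists]
    constructor
    · have := subOf_sublist q C (List.ofFn fun i => (d i : ℕ) + 1) 0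
        (by intro a ha; rw [List.mem_ofFn] at ha; obtain ⟨i, rfl⟩ := ha
            exact Nat.succ_le_succ (Nat.zero_le _))
        (by rw [List.sum_ofFn]; simpa using hd)
      simpa using this
    · rw [subOf_length]; simp
  · intro d1 h1 d2 h2 heq
    have hofn := subOf_inj q _ _ 0
      (by intro a ha; rw [List.mem_ofFn] at ha; obtain ⟨i, rfl⟩ := ha
          exact ⟨Nat.succ_le_succ (Nat.zero_le _), (d1 i).isLt⟩)
      (by intro a ha; rw [List.mem_ofFn] at ha; obtain ⟨i, rfl⟩ := ha
          exact ⟨Nat.succ_le_succ (Nat.zero_le _), (d2 i).isLt⟩) heq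
    have hfun := List.ofFn_inj.mp hofn
    funext i
    have h3 := congrFun hfun i
    exact Fin.ext (by omega)

lemma M_le_pow (q C L : ℕ) (hq : 1 ≤ q) : M q C L ≤ q ^ L := by
  classical
  have hcard : q ^ L = Fintype.card (Fin L → Fin q) := by simp [Fintype.card_fun]
  rw [hcard, ← Finset.card_univ]
  have hentry : ∀ s ∈ (altSeq q C).sublists.toFinset.filter (fun s => s.length = L),
      ∀ x ∈ s, 1 ≤ x ∧ x ≤ q := by
    intro s hs x hx
    simp only [Finset.mem_filter, List.mem_toFinset, List.mem_sublists] at hs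
    have := hs.1.subset hx
    simp only [altSeq, List.mem_map, List.mem_range] at this
    obtain ⟨i, _, rfl⟩ := this
    have := Nat.mod_lt i (show 0 < q by omega)
    omega
  have hlen : ∀ s ∈ (altSeq q C).sublists.toFinset.filter (fun s => s.length = L),
      s.length = L := by
    intro s hs
    simp only [Finset.mem_filter] at hs
    exact hs.2
  apply Finset.card_le_card_of_injOn
    (fun s => fun i : Fin L => (⟨min (s.getD i 1 - 1) (q - 1), by omega⟩ : Fin q))
  · intro s hs; exact Finset.mem_univ _
  · intro s1 h1 s2 h2 heq
    have hl1 := hlen s1 h1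
    have hl2 := hlen s2 h2
    apply List.ext_getElem (by rw [hl1, hl2])
    intro i hi1 hi2
    have hifin : i < L := by omega
    have hv := congrFun heq ⟨i, hifin⟩
    simp only [Fin.mk.injEq] at hv
    have hg1 : s1.getD i 1 = s1[i] := List.getD_eq_getElem s1 1 hi1
    have hg2 : s2.getD i 1 = s2[i] := List.getD_eq_getElem s2 1 hi2
    obtain ⟨ha1, ha2⟩ := hentry s1 h1 s1[i] (List.getElem_mem hi1)
    obtain ⟨hb1, hb2⟩ := hentry s2 h2 s2[i] (List.getElem_mem hi2)
    rw [hg1, hg2] at hv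
    omega


lemma pow_le_two_mul_card_D (q C L : ℕ) (hq : 1 ≤ q) (h : L * (q + 1) ≤ 2 * C) :
    q ^ L ≤ 2 * (Dset q C L).card := by
  classical
  have hsum_pair : ∀ d : Fin L → Fin q,
      (∑ i, (((d i).rev : ℕ) + 1)) + (∑ i, ((d i : ℕ) + 1)) = L * (q + 1) := by
    intro d
    rw [← Finset.sum_add_distrib]
    have : ∀ i : Fin L, (((d i).rev : ℕ) + 1) + ((d i : ℕ) + 1) = q + 1 := by
      intro i
      have h1 : ((d i).rev : ℕ) = q - ((d i : ℕ) + 1) := Fin.val_rev (d i)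
      have := (d i).isLt
      omega
    rw [Finset.sum_congr rfl (fun i _ => this i)]
    simp [Finset.card_univ, mul_comm]
  have hcompl : (Finset.univ \ Dset q C L).card ≤ (Dset q C L).card := by
    apply Finset.card_le_card_of_injOn (fun d => fun i => (d i).rev)
    · intro d hd
      simp only [Dset, Finset.mem_coe, Finset.mem_sdiff, Finset.mem_filter, Finset.mem_univ, true_and,
        not_le] at hd
      simp only [Dset, Finset.mem_coe, Finset.mem_filter, Finset.mem_univ, true_and]
      have := hsum_pair d
      omega
    · intro d1 _ d2 _ heq
      funext i
      have := congrFun heq i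
      simp only at this
      exact Fin.rev_injective this
  have htot : (Dset q C L).card + (Finset.univ \ Dset q C L).card = q ^ L := by
    rw [add_comm, Finset.card_sdiff_add_card_eq_card (Finset.subset_univ _),
      Finset.card_univ]
    simp [Fintype.card_fun]
  omega





lemma two_pow_le_card_D (q C L : ℕ) (hq : 2 ≤ q) (hL : L ≤ C) :
    2 ^ (min L (C - L)) ≤ (Dset q C L).card := by
  classical
  set m := min L (C - L) with hm
  have hcard2 : 2 ^ m = Fintype.card (Fin m → Fin 2) := by simp [Fintype.card_fun]
  rw [hcard2, ← Finset.card_univ]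
  apply Finset.card_le_card_of_injOn
    (fun d => fun i : Fin L => if h : (i : ℕ) < m then
      (Fin.castLE hq (d ⟨i, h⟩)) else ⟨0, by omega⟩)
  · intro d _
    simp only [Dset, Finset.mem_coe, Finset.mem_filter, Finset.mem_univ, true_and]
    have hbound : ∀ i : Fin L,
        (((if h : (i : ℕ) < m then (Fin.castLE hq (d ⟨i, h⟩)) else (⟨0, by omega⟩ : Fin q)) : Fin q) : ℕ) + 1
        ≤ 1 + (if (i : ℕ) < m then 1 else 0) := by
      intro i
      by_cases h : (i : ℕ) < m
      · simp only [h, dif_pos, if_pos]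
        have := (d ⟨i, h⟩).isLt
        simp only [Fin.coe_castLE]
        omega
      · simp [h]
    have step1 := Finset.sum_le_sum (fun i (_ : i ∈ Finset.univ) => hbound i)
    have step2 : ∑ i : Fin L, (1 + (if (i : ℕ) < m then 1 else 0))
        = L + (Finset.univ.filter (fun i : Fin L => (i : ℕ) < m)).card := by
      rw [Finset.sum_add_distrib]
      simp [Finset.sum_ite, Finset.card_univ]
    have step3 : (Finset.univ.filter (fun i : Fin L => (i : ℕ) < m)).card ≤ m := by
      rcases Nat.eq_zero_or_pos m with hm0 | hm0
      · simp [hm0]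
      · have hle : (Finset.univ.filter (fun i : Fin L => (i : ℕ) < m)).card
            ≤ (Finset.univ : Finset (Fin m)).card := by
          refine Finset.card_le_card_of_injOn
            (fun i => (⟨min (i : ℕ) (m - 1), by omega⟩ : Fin m)) ?_ ?_
          · intro i _; exact Finset.mem_univ _
          · intro i1 hi1 i2 hi2 hv
            simp only [Finset.mem_coe, Finset.mem_filter] at hi1 hi2
            simp only [Fin.mk.injEq] at hv
            exact Fin.ext (by omega)
        simpa using hle
    refine le_trans step1 ?_
    rw [step2]
    omega
  · intro d1 _ d2 _ heq
    funext j
    have hjL : (j : ℕ) < L := by omega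
    have := congrFun heq ⟨j, hjL⟩
    simp only [Fin.val_mk, j.isLt, dif_pos] at this
    exact Fin.ext (by simpa [Fin.castLE] using congrArg Fin.val this)


lemma pow_le_two_mul_M (q C L : ℕ) (hq : 2 ≤ q) (h : L * (q + 1) ≤ 2 * C) :
    q ^ L ≤ 2 * M q C L := by
  have h1 := pow_le_two_mul_card_D q C L (by omega) h
  have h2 := card_D_le_M q C L
  omega

lemma two_pow_le_M (q C L : ℕ) (hq : 2 ≤ q) (hL : L ≤ C) :
    2 ^ (min L (C - L)) ≤ M q C L := by
  have h1 := two_pow_le_card_D q C L hq hL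
  have h2 := card_D_le_M q C L
  omega



section analytic
variable (q : ℕ) (hq : 2 ≤ q)

lemma floor_le_C {ρ : ℝ} (hρ1 : ρ ≤ 1) (C : ℕ) : ⌊ρ * C⌋₊ ≤ C := by
  have : ρ * C ≤ (C : ℝ) := by nlinarith [Nat.cast_nonneg (α := ℝ) C]
  calc ⌊ρ * C⌋₊ ≤ ⌊(C : ℝ)⌋₊ := Nat.floor_mono this
    _ = C := Nat.floor_natCast C

lemma floor_cast_le {ρ : ℝ} (hρ0 : 0 ≤ ρ) (C : ℕ) : ((⌊ρ * C⌋₊ : ℕ) : ℝ) ≤ ρ * C :=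
  Nat.floor_le (by positivity)

include hq in
lemma cap_eq_of_small {ρ : ℝ} (hρ0 : 0 < ρ) (hρle : ρ ≤ 2 / ((q : ℝ) + 1)) :
    cap q ρ = ρ * Real.logb 2 q := by
  have hq1 : (1 : ℝ) < q := by exact_mod_cast hq.trans_lt' one_lt_two
  have hlogq : 0 < Real.logb 2 q := Real.logb_pos one_lt_two hq1
  have hρ1 : ρ ≤ 1 := by
    have h3 : (3 : ℝ) ≤ (q : ℝ) + 1 := by exact_mod_cast Nat.succ_le_succ hq
    have : 2 / ((q : ℝ) + 1) ≤ 1 := by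
      rw [div_le_one (by linarith)]; linarith
    linarith
  -- bounds on M
  have key : ∀ C : ℕ, 1 ≤ C →
      ((⌊ρ * C⌋₊ : ℝ) * Real.logb 2 q - 1) / C ≤ Real.logb 2 (M q C ⌊ρ * C⌋₊) / C ∧
      Real.logb 2 (M q C ⌊ρ * C⌋₊) / C ≤ ((⌊ρ * C⌋₊ : ℝ) * Real.logb 2 q) / C := by
    intro C hC
    set L := ⌊ρ * C⌋₊ with hL
    have hCpos : (0 : ℝ) < C := by exact_mod_cast hC
    have h2C : L * (q + 1) ≤ 2 * C := by
      have h1 : (L : ℝ) * ((q : ℝ) + 1) ≤ ρ * C * ((q : ℝ) + 1) := by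
        have := floor_cast_le (ρ := ρ) hρ0.le C
        nlinarith
      have h2 : ρ * ((q : ℝ) + 1) ≤ 2 := by
        have := (le_div_iff₀ (show (0:ℝ) < (q:ℝ)+1 by positivity)).mp hρle
        linarith
      have h3 : (L : ℝ) * ((q : ℝ) + 1) ≤ 2 * C := by nlinarith
      exact_mod_cast h3
    have hMub := M_le_pow q C L (by omega)
    have hMlb := pow_le_two_mul_M q C L hq h2C
    have hM1 : 1 ≤ M q C L := by
      have : 1 ≤ q ^ L := Nat.one_le_pow _ _ (by omega)
      omega
    have hMpos : (0 : ℝ) < (M q C L : ℝ) := by exact_mod_cast hM1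
    have hub : Real.logb 2 (M q C L) ≤ (L : ℝ) * Real.logb 2 q := by
      calc Real.logb 2 (M q C L) ≤ Real.logb 2 ((q : ℝ) ^ L) := by
            apply Real.logb_le_logb_of_le one_lt_two hMpos
            exact_mod_cast hMub
        _ = (L : ℝ) * Real.logb 2 q := by rw [Real.logb_pow]
    have hlb : (L : ℝ) * Real.logb 2 q - 1 ≤ Real.logb 2 (M q C L) := by
      have h1 : Real.logb 2 ((q : ℝ) ^ L) ≤ Real.logb 2 (2 * (M q C L : ℝ)) := by
        apply Real.logb_le_logb_of_le one_lt_two (by positivity)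
        exact_mod_cast hMlb
      rw [Real.logb_pow, Real.logb_mul (by norm_num) (by positivity),
        Real.logb_self_eq_one one_lt_two] at h1
      linarith
    constructor
    · rw [div_le_div_iff₀ hCpos hCpos]; nlinarith
    · rw [div_le_div_iff₀ hCpos hCpos]; nlinarith
  -- tendsto
  have hu : Tendsto (fun C : ℕ => ((⌊ρ * (C : ℝ)⌋₊ : ℝ) / (C : ℝ))) atTop (𝓝 ρ) :=
    (tendsto_nat_floor_mul_div_atTop hρ0.le).comp tendsto_natCast_atTop_atTop
  have hupper : Tendsto (fun C : ℕ => ((⌊ρ * (C : ℝ)⌋₊ : ℝ) / (C : ℝ)) * Real.logb 2 q)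
      atTop (𝓝 (ρ * Real.logb 2 q)) := hu.mul_const _
  have hlower : Tendsto (fun C : ℕ =>
      ((⌊ρ * (C : ℝ)⌋₊ : ℝ) / (C : ℝ)) * Real.logb 2 q - 1 / C)
      atTop (𝓝 (ρ * Real.logb 2 q)) := by
    have h0 : Tendsto (fun C : ℕ => 1 / (C : ℝ)) atTop (𝓝 0) :=
      tendsto_one_div_atTop_nhds_zero_nat
    simpa using hupper.sub h0
  have hT : Tendsto (fun C : ℕ => Real.logb 2 (M q C ⌊ρ * C⌋₊) / C) atTop
      (𝓝 (ρ * Real.logb 2 q)) := by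
    apply tendsto_of_tendsto_of_tendsto_of_le_of_le' hlower hupper
    · filter_upwards [eventually_ge_atTop 1] with C hC
      have hCpos : (0 : ℝ) < C := by exact_mod_cast hC
      have := (key C hC).1
      calc ((⌊ρ * (C : ℝ)⌋₊ : ℝ) / (C : ℝ)) * Real.logb 2 q - 1 / C
          = ((⌊ρ * C⌋₊ : ℝ) * Real.logb 2 q - 1) / C := by ring
        _ ≤ _ := this
    · filter_upwards [eventually_ge_atTop 1] with C hC
      have := (key C hC).2
      calc Real.logb 2 (M q C ⌊ρ * C⌋₊) / C ≤ ((⌊ρ * C⌋₊ : ℝ) * Real.logb 2 q) / C := this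
        _ = ((⌊ρ * (C : ℝ)⌋₊ : ℝ) / (C : ℝ)) * Real.logb 2 q := by ring
  exact hT.limsup_eq

include hq in
lemma cap_bounds {ρ : ℝ} (hρ0 : 0 < ρ) (hρ1 : ρ < 1) :
    0 < cap q ρ ∧ cap q ρ ≤ ρ * Real.logb 2 q := by
  have hq1 : (1 : ℝ) < q := by exact_mod_cast hq.trans_lt' one_lt_two
  have hlogq : 0 < Real.logb 2 q := Real.logb_pos one_lt_two hq1
  set g : ℕ → ℝ := fun C => Real.logb 2 (M q C ⌊ρ * C⌋₊) / C with hg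
  -- upper eventual bound
  have E1 : ∀ᶠ C : ℕ in atTop, g C ≤ ρ * Real.logb 2 q := by
    filter_upwards [eventually_ge_atTop 1] with C hC
    set L := ⌊ρ * C⌋₊ with hLdef
    have hCpos : (0 : ℝ) < C := by exact_mod_cast hC
    have hMub := M_le_pow q C L (by omega)
    have hLC : L ≤ C := floor_le_C hρ1.le C
    have hMlb' := two_pow_le_M q C L hq hLC
    have hM1 : 1 ≤ M q C L := le_trans (Nat.one_le_two_pow) hMlb'
    have hMpos : (0 : ℝ) < (M q C L : ℝ) := by exact_mod_cast hM1
    have hub : Real.logb 2 (M q C L) ≤ (L : ℝ) * Real.logb 2 q := by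
      calc Real.logb 2 (M q C L) ≤ Real.logb 2 ((q : ℝ) ^ L) := by
            apply Real.logb_le_logb_of_le one_lt_two hMpos
            exact_mod_cast hMub
        _ = (L : ℝ) * Real.logb 2 q := by rw [Real.logb_pow]
    have hLle : (L : ℝ) ≤ ρ * C := floor_cast_le hρ0.le C
    have : Real.logb 2 (M q C L) ≤ ρ * C * Real.logb 2 q := by nlinarith
    rw [hg]
    simp only
    rw [div_le_iff₀ hCpos]
    calc Real.logb 2 (M q C L) ≤ ρ * C * Real.logb 2 q := this
      _ = ρ * Real.logb 2 q * C := by ring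
  -- lower eventual bound
  set c₀ : ℝ := min ρ (1 - ρ) / 2 with hc₀
  have hc₀pos : 0 < c₀ := by
    have : 0 < min ρ (1 - ρ) := lt_min hρ0 (by linarith)
    positivity
  have htm : Tendsto (fun C : ℕ => min ((⌊ρ * (C : ℝ)⌋₊ : ℝ) / (C : ℝ))
      (1 - (⌊ρ * (C : ℝ)⌋₊ : ℝ) / (C : ℝ))) atTop (𝓝 (min ρ (1 - ρ))) := by
    have hu : Tendsto (fun C : ℕ => ((⌊ρ * (C : ℝ)⌋₊ : ℝ) / (C : ℝ))) atTop (𝓝 ρ) :=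
      (tendsto_nat_floor_mul_div_atTop hρ0.le).comp tendsto_natCast_atTop_atTop
    exact hu.min (tendsto_const_nhds.sub hu)
  have E2 : ∀ᶠ C : ℕ in atTop, c₀ ≤ g C := by
    filter_upwards [eventually_ge_atTop 1,
      htm.eventually (eventually_ge_nhds (show c₀ < min ρ (1 - ρ) by
        rw [hc₀]; linarith [lt_min hρ0 (show (0:ℝ) < 1 - ρ by linarith)]))] with C hC hmin
    set L := ⌊ρ * C⌋₊ with hLdef
    have hCpos : (0 : ℝ) < C := by exact_mod_cast hC
    have hLC : L ≤ C := floor_le_C hρ1.le C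
    have hMlb := two_pow_le_M q C L hq hLC
    have hM1 : 1 ≤ M q C L := le_trans (Nat.one_le_two_pow) hMlb
    have hMpos : (0 : ℝ) < (M q C L : ℝ) := by exact_mod_cast hM1
    have hlogM : ((min L (C - L) : ℕ) : ℝ) ≤ Real.logb 2 (M q C L) := by
      have h1 : Real.logb 2 ((2 : ℝ) ^ (min L (C - L))) ≤ Real.logb 2 (M q C L) := by
        apply Real.logb_le_logb_of_le one_lt_two (by positivity)
        exact_mod_cast hMlb
      rwa [Real.logb_pow, Real.logb_self_eq_one one_lt_two, mul_one] at h1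
    have hcast : ((min L (C - L) : ℕ) : ℝ) = min ((L : ℕ) : ℝ) (((C : ℕ) : ℝ) - L) := by
      rw [Nat.cast_min, Nat.cast_sub hLC]
    have hminC : min ((⌊ρ * (C : ℝ)⌋₊ : ℝ) / (C : ℝ)) (1 - (⌊ρ * (C : ℝ)⌋₊ : ℝ) / (C : ℝ))
        = ((min L (C - L) : ℕ) : ℝ) / C := by
      rw [hcast]
      rw [← min_div_div_right hCpos.le]
      congr 1
      field_simp
      rfl
    rw [hg]
    simp only
    calc c₀ ≤ ((min L (C - L) : ℕ) : ℝ) / C := by rw [← hminC]; exact hmin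
      _ ≤ Real.logb 2 (M q C L) / C := by gcongr
  constructor
  · calc (0 : ℝ) < c₀ := hc₀pos
      _ ≤ cap q ρ := le_limsup_of_frequently_le E2.frequently
          ⟨ρ * Real.logb 2 q, eventually_map.mpr E1⟩
  · exact Filter.limsup_le_of_le (Filter.IsCoboundedUnder.of_frequently_ge
      ((E2.frequently).mono (fun C h => h))) E1

end analytic


lemma key_ineq (q : ℕ) (hq : 2 ≤ q) :
    (2 / ((q : ℝ) + 1)) * Real.log q ≤ Real.binEntropy (2 / ((q : ℝ) + 1)) := by
  have hq2 : (2 : ℝ) ≤ (q : ℝ) := by exact_mod_cast hq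
  set n : ℝ := (q : ℝ) + 1 with hn
  have h3 : (3 : ℝ) ≤ n := by rw [hn]; linarith
  have hnpos : (0 : ℝ) < n := by linarith
  have hn2 : (0 : ℝ) ≤ n - 2 := by linarith
  have hBE : Real.binEntropy (2 / n) = (2 / n) * Real.log (n / 2)
      + ((n - 2) / n) * Real.log (n / (n - 2)) := by
    rw [Real.binEntropy]
    have h1 : (2 / n)⁻¹ = n / 2 := by rw [inv_div]
    have h2 : (1 : ℝ) - 2 / n = (n - 2) / n := by field_simp
    have h4 : ((n - 2) / n)⁻¹ = n / (n - 2) := by rw [inv_div]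
    rw [h1, h2, h4]
  rw [hBE]
  have hq' : Real.log (q : ℝ) = Real.log (n - 1) := by norm_num [hn]
  rw [hq']
  rcases eq_or_lt_of_le h3 with h3eq | h3lt
  · -- n = 3 (q = 2)
    rw [← h3eq]
    norm_num
    have e1 : Real.log ((3 : ℝ) / 2) = Real.log 3 - Real.log 2 :=
      Real.log_div (by norm_num) (by norm_num)
    have l27 : Real.log (27 : ℝ) = 3 * Real.log 3 := by
      rw [show (27 : ℝ) = 3 ^ (3 : ℕ) by norm_num, Real.log_pow]; norm_num
    have l16 : Real.log (16 : ℝ) = 4 * Real.log 2 := by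
      rw [show (16 : ℝ) = 2 ^ (4 : ℕ) by norm_num, Real.log_pow]; norm_num
    have hpos : (0 : ℝ) ≤ Real.log (27 / 16) := Real.log_nonneg (by norm_num)
    rw [Real.log_div (by norm_num) (by norm_num), l27, l16] at hpos
    linarith
  · -- n ≥ 4 (q ≥ 3)
    have h4n : (4 : ℝ) ≤ n := by
      have hq3 : (3 : ℕ) ≤ q := by
        by_contra h
        have hq2' : q = 2 := by omega
        rw [hq2'] at hn
        rw [hn] at h3lt; norm_num at h3lt
      have : (3 : ℝ) ≤ (q : ℝ) := by exact_mod_cast hq3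
      rw [hn]; linarith
    have hn2' : (0 : ℝ) < n - 2 := by linarith
    have hn1 : (0 : ℝ) < n - 1 := by linarith
    set Lg : ℝ := Real.log (n / (n - 2)) with hLg
    have hlog1 : 2 / n ≤ Lg := by
      have h1 : Real.log ((n - 2) / n) ≤ (n - 2) / n - 1 :=
        Real.log_le_sub_one_of_pos (div_pos hn2' hnpos)
      have h2 : Lg = -Real.log ((n - 2) / n) := by
        rw [hLg, ← Real.log_inv, inv_div]
      have h3' : (n - 2) / n - 1 = -(2 / n) := by field_simp; ring
      rw [h2]; rw [h3'] at h1; linarith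
    have hsplit : Real.log (n - 1) = Real.log (n / 2) + Real.log (2 * (n - 1) / n) := by
      rw [← Real.log_mul (ne_of_gt (by linarith : (0:ℝ) < n / 2))
        (ne_of_gt (div_pos (by linarith) hnpos))]
      congr 1
      field_simp
    have hlog2 : Real.log (2 * (n - 1) / n) ≤ Real.log 2 - 1 / n := by
      have h1 : Real.log ((n - 1) / n) ≤ (n - 1) / n - 1 :=
        Real.log_le_sub_one_of_pos (div_pos hn1 hnpos)
      have h2 : Real.log (2 * (n - 1) / n) = Real.log 2 + Real.log ((n - 1) / n) := by
        rw [mul_div_assoc, Real.log_mul (by norm_num) (ne_of_gt (div_pos hn1 hnpos))]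
      have h3' : (n - 1) / n - 1 = -(1 / n) := by field_simp; ring
      rw [h2]; rw [h3'] at h1; linarith
    have hln2 : Real.log 2 < 0.6931471808 := Real.log_two_lt_d9
    have hfrac : Real.log 2 ≤ (n - 1) / n := by
      have : (3 : ℝ) / 4 ≤ (n - 1) / n := by
        rw [div_le_div_iff₀ (by norm_num) hnpos]
        linarith
      linarith
    have goal2 : Real.log (n - 1) ≤ Real.log (n / 2) + ((n - 2) / 2) * Lg := by
      have c1 : Real.log (n - 1) ≤ Real.log (n / 2) + Real.log 2 - 1 / n := by
        rw [hsplit]; linarith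
      have c2 : (n - 2) / n ≤ (n - 2) / 2 * Lg := by
        have hm := mul_le_mul_of_nonneg_left hlog1 (by linarith : (0:ℝ) ≤ (n - 2) / 2)
        have he : (n - 2) / 2 * (2 / n) = (n - 2) / n := by field_simp
        linarith [he ▸ hm]
      have c3 : Real.log 2 - 1 / n ≤ (n - 2) / n := by
        have he : (n - 1) / n - 1 / n = (n - 2) / n := by field_simp; ring
        linarith
      linarith
    have hpos2 : (0 : ℝ) < 2 / n := by positivity
    calc 2 / n * Real.log (n - 1)
        ≤ 2 / n * (Real.log (n / 2) + ((n - 2) / 2) * Lg) :=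
          mul_le_mul_of_nonneg_left goal2 hpos2.le
      _ = 2 / n * Real.log (n / 2) + (n - 2) / n * Lg := by
          field_simp



lemma binH_eq (x : ℝ) : binH x = Real.binEntropy x / Real.log 2 := by
  rw [binH, Real.binEntropy, Real.logb, Real.logb, Real.log_inv, Real.log_inv]
  ring

lemma rhostar_ge (q : ℕ) (hq : 2 ≤ q) (ρstar : ℝ) (hρstar : ρstar ∈ Set.Ioo (0 : ℝ) 1)
    (hE : Real.binEntropy ρstar = ρstar * Real.log q) : 2 / ((q : ℝ) + 1) ≤ ρstar := by
  by_contra hcon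
  push_neg at hcon
  set c : ℝ := 2 / ((q : ℝ) + 1) with hc
  have hq2 : (2 : ℝ) ≤ (q : ℝ) := by exact_mod_cast hq
  have hcpos : 0 < c := by rw [hc]; positivity
  have hc1 : c ≤ 1 := by
    rw [hc, div_le_one (by linarith)]; linarith
  have hlogq : 0 ≤ Real.log (q : ℝ) := Real.log_nonneg (by linarith)
  -- strict concavity of x ↦ binEntropy x - log q * x
  have hconc : StrictConcaveOn ℝ (Set.Icc (0:ℝ) 1) (fun x => Real.binEntropy x
      - Real.log (q : ℝ) • x) := by
    apply Real.strictConcave_binEntropy.sub_convexOn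
    exact (convexOn_id (convex_Icc (0:ℝ) 1)).smul hlogq
  set t : ℝ := ρstar / c with ht
  have ht0 : 0 < t := div_pos hρstar.1 hcpos
  have ht1 : t < 1 := (div_lt_one hcpos).mpr hcon
  have hcomb := hconc.2 (Set.mem_Icc.mpr ⟨le_refl 0, zero_le_one⟩)
    (Set.mem_Icc.mpr ⟨hcpos.le, hc1⟩) (by exact hcpos.ne) (by linarith : (0:ℝ) < 1 - t)
    ht0 (by ring)
  have hcc : (1 - t) • (0:ℝ) + t • c = ρstar := by
    simp only [smul_eq_mul, mul_zero, zero_add]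
    rw [ht]; field_simp
  rw [hcc] at hcomb
  have hf0 : Real.binEntropy (0:ℝ) - Real.log (q : ℝ) • (0:ℝ) = 0 := by
    simp [Real.binEntropy_zero]
  have hfρ : Real.binEntropy ρstar - Real.log (q : ℝ) • ρstar = 0 := by
    rw [hE]; simp [smul_eq_mul]; ring
  have hfc : 0 ≤ Real.binEntropy c - Real.log (q : ℝ) • c := by
    have := key_ineq q hq
    rw [← hc] at this
    simp only [smul_eq_mul]
    nlinarith
  simp only [smul_eq_mul, mul_zero, sub_zero, Real.binEntropy_zero] at hcomb
  simp only [smul_eq_mul] at hfc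
  have hpos : 0 ≤ t * (Real.binEntropy c - Real.log (q:ℝ) * c) := mul_nonneg ht0.le hfc
  nlinarith [hcomb, hE]

lemma one_div_le_ratio (q : ℕ) (hq : 2 ≤ q) {ρ : ℝ} (hρ0 : 0 < ρ) (hρ1 : ρ < 1) :
    1 / Real.logb 2 q ≤ ρ / cap q ρ := by
  have hq1 : (1 : ℝ) < q := by exact_mod_cast hq.trans_lt' one_lt_two
  have hlogq : 0 < Real.logb 2 q := Real.logb_pos one_lt_two hq1
  obtain ⟨hcpos, hcle⟩ := cap_bounds q hq hρ0 hρ1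
  have h1 : ρ / (ρ * Real.logb 2 q) ≤ ρ / cap q ρ := by
    gcongr
  have h2 : ρ / (ρ * Real.logb 2 q) = 1 / Real.logb 2 q := by
    rw [div_eq_div_iff (by positivity) hlogq.ne']
    ring
  linarith

lemma ratio_eq_of_small (q : ℕ) (hq : 2 ≤ q) {ρ : ℝ} (hρ0 : 0 < ρ) (hρle : ρ ≤ 2 / ((q : ℝ) + 1)) :
    ρ / cap q ρ = 1 / Real.logb 2 q := by
  have hq1 : (1 : ℝ) < q := by exact_mod_cast hq.trans_lt' one_lt_two
  have hlogq : 0 < Real.logb 2 q := Real.logb_pos one_lt_two hq1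
  rw [cap_eq_of_small q hq hρ0 hρle]
  rw [div_eq_div_iff (by positivity) hlogq.ne']
  ring

end S17

theorem stmt17 (q : ℕ) (hq : 2 ≤ q) (ρstar : ℝ) (hρstar : ρstar ∈ Set.Ioo (0 : ℝ) 1)
    (heq : ρstar / binH ρstar = 1 / Real.logb 2 q) :
    (∀ ρ ∈ Set.Ioc (0 : ℝ) (2 / ((q : ℝ) + 1)), ρ / cap q ρ = 1 / Real.logb 2 q) ∧
    (∀ ρ ∈ Set.Ico ρstar (1 : ℝ), 1 / Real.logb 2 q ≤ ρ / cap q ρ) ∧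
    (∃ ρ₀ ∈ Set.Icc (2 / ((q : ℝ) + 1)) ρstar,
      ∀ ρ ∈ Set.Ioo (0 : ℝ) 1, ρ₀ / cap q ρ₀ ≤ ρ / cap q ρ) := by
  have hq2 : (2 : ℝ) ≤ (q : ℝ) := by exact_mod_cast hq
  have hq1 : (1 : ℝ) < q := by linarith
  have hlogq : 0 < Real.logb 2 q := Real.logb_pos one_lt_two hq1
  have hlog2 : 0 < Real.log 2 := Real.log_pos one_lt_two
  -- convert heq into binEntropy equation
  have hbinH_ne : binH ρstar ≠ 0 := by
    intro h0
    rw [h0, div_zero] at heq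
    exact (one_div_ne_zero hlogq.ne') heq.symm
  have hbinH : binH ρstar = ρstar * Real.logb 2 q := by
    rw [div_eq_div_iff hbinH_ne hlogq.ne'] at heq
    linarith
  have hE : Real.binEntropy ρstar = ρstar * Real.log q := by
    have h1 : Real.binEntropy ρstar = binH ρstar * Real.log 2 := by
      rw [S17.binH_eq]; field_simp
    rw [h1, hbinH, Real.logb]
    field_simp
  have hge := S17.rhostar_ge q hq ρstar hρstar hE
  have hcval : (0:ℝ) < 2 / ((q : ℝ) + 1) := by positivity
  refine ⟨?_, ?_, ?_⟩
  · intro ρ hρ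
    exact S17.ratio_eq_of_small q hq hρ.1 hρ.2
  · intro ρ hρ
    exact S17.one_div_le_ratio q hq (lt_of_lt_of_le hρstar.1 hρ.1) hρ.2
  · refine ⟨2 / ((q : ℝ) + 1), ⟨le_refl _, hge⟩, ?_⟩
    intro ρ hρ
    rw [S17.ratio_eq_of_small q hq hcval (le_refl _)]
    exact S17.one_div_le_ratio q hq hρ.1 hρ.2
end
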